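/- arXiv:2605.19364 — 8 statements merged into one kernel-verified Lean document; each statement's English description precedes it below -/
import Mathlib

section
/- Let κ ∈ (0,1), let f₁, f₂ ∈ ℝⁿ be orthonormal vectors, and let (x₁, x₂) ∈ ℝⁿ × ℝⁿ satisfy ‖x₁‖² + ‖x₂‖² − 2κ⟨x₁, x₂⟩ = 1 − κ². Then ⟨f₁, x₁⟩² + ⟨f₂, x₂⟩² ≤ 1. -/
open scoped RealInnerProductSpace

/-!
The quadratic form `q(x₁, x₂) = ‖x₁‖² + ‖x₂‖² − 2κ⟪x₁, x₂⟫` equals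
`(1 − κ)/2 ‖x₁ + x₂‖² + (1 + κ)/2 ‖x₁ − x₂‖²`, a nonnegative combination of squared norms for
`|κ| ≤ 1`. Bessel's inequality applied to `x₁ ± x₂` therefore bounds `q(x₁, x₂)` below by the sum of
the scalar forms `q(⟪f, x₁⟫, ⟪f, x₂⟫)` over an orthonormal family. Finally the scalar form satisfies
`q(s, t) = (t − κ s)² + (1 − κ²) s² ≥ (1 − κ²) s²`, so
`(1 − κ²)(⟪f₁, x₁⟫² + ⟪f₂, x₂⟫²) ≤ q(x₁, x₂) = 1 − κ²`.
-/

section EllipsoidForm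

variable {E : Type*} [NormedAddCommGroup E] [InnerProductSpace ℝ E]

def ellipsoidForm (κ : ℝ) (x₁ x₂ : E) : ℝ :=
  ‖x₁‖ ^ 2 + ‖x₂‖ ^ 2 - 2 * κ * ⟪x₁, x₂⟫

theorem ellipsoidForm_comm (κ : ℝ) (x₁ x₂ : E) :
    ellipsoidForm κ x₁ x₂ = ellipsoidForm κ x₂ x₁ := by
  rw [ellipsoidForm, ellipsoidForm, real_inner_comm, add_comm (‖x₁‖ ^ 2)]

theorem ellipsoidForm_eq_add_norm_sq (κ : ℝ) (x₁ x₂ : E) :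
    ellipsoidForm κ x₁ x₂ = (1 - κ) / 2 * ‖x₁ + x₂‖ ^ 2 + (1 + κ) / 2 * ‖x₁ - x₂‖ ^ 2 := by
  rw [ellipsoidForm, norm_add_sq_real, norm_sub_sq_real]
  ring

theorem Orthonormal.sum_ellipsoidForm_inner_le {ι : Type*} {f : ι → E} (hf : Orthonormal ℝ f)
    (s : Finset ι) {κ : ℝ} (hκ : |κ| ≤ 1) (x₁ x₂ : E) :
    ∑ i ∈ s, ellipsoidForm κ ⟪f i, x₁⟫ ⟪f i, x₂⟫ ≤ ellipsoidForm κ x₁ x₂ := by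
  obtain ⟨hκ₀, hκ₁⟩ := abs_le.1 hκ
  have hbessel_add := hf.sum_inner_products_le (s := s) (x₁ + x₂)
  have hbessel_sub := hf.sum_inner_products_le (s := s) (x₁ - x₂)
  simp only [ellipsoidForm_eq_add_norm_sq, ← inner_add_right, ← inner_sub_right,
    Finset.sum_add_distrib, ← Finset.mul_sum]
  gcongr
  linarith

theorem one_sub_sq_mul_sq_le_ellipsoidForm (κ s t : ℝ) :
    (1 - κ ^ 2) * s ^ 2 ≤ ellipsoidForm κ s t := by
  have hsplit : ellipsoidForm κ s t = (t - κ * s) ^ 2 + (1 - κ ^ 2) * s ^ 2 := by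
    simp only [ellipsoidForm, Real.norm_eq_abs, sq_abs, RCLike.inner_apply, conj_trivial]
    ring
  rw [hsplit]
  exact le_add_of_nonneg_left (sq_nonneg _)

end EllipsoidForm

/-- If `f₁, f₂ ∈ ℝⁿ` are orthonormal and `(x₁,x₂)` lies on the ellipsoid
`‖x₁‖² + ‖x₂‖² − 2κ⟨x₁,x₂⟩ = 1 − κ²` with `κ ∈ (0,1)`, then
`⟨f₁,x₁⟩² + ⟨f₂,x₂⟩² ≤ 1`. -/
theorem stmt2 (n : ℕ) (κ : ℝ) (hκ : κ ∈ Set.Ioo (0:ℝ) 1)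
    (f₁ f₂ x₁ x₂ : EuclideanSpace ℝ (Fin n))
    (hf₁ : ‖f₁‖ = 1) (hf₂ : ‖f₂‖ = 1) (hf : ⟪f₁, f₂⟫ = 0)
    (hx : ‖x₁‖ ^ 2 + ‖x₂‖ ^ 2 - 2 * κ * ⟪x₁, x₂⟫ = 1 - κ ^ 2) :
    ⟪f₁, x₁⟫ ^ 2 + ⟪f₂, x₂⟫ ^ 2 ≤ 1 := by
  obtain ⟨hκ₀, hκ₁⟩ := hκ
  have hortho : Orthonormal ℝ ![f₁, f₂] := by
    simp [orthonormal_vecCons_iff, hf₁, hf₂, hf]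
  have hbessel : ellipsoidForm κ ⟪f₁, x₁⟫ ⟪f₁, x₂⟫ + ellipsoidForm κ ⟪f₂, x₁⟫ ⟪f₂, x₂⟫
      ≤ ellipsoidForm κ x₁ x₂ := by
    simpa [Fin.sum_univ_two] using
      hortho.sum_ellipsoidForm_inner_le Finset.univ (abs_le.2 ⟨by linarith, hκ₁.le⟩) x₁ x₂
  have h₁ := one_sub_sq_mul_sq_le_ellipsoidForm κ ⟪f₁, x₁⟫ ⟪f₁, x₂⟫
  have h₂ := one_sub_sq_mul_sq_le_ellipsoidForm κ ⟪f₂, x₂⟫ ⟪f₂, x₁⟫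
  rw [ellipsoidForm_comm] at h₂
  have hq : ellipsoidForm κ x₁ x₂ = 1 - κ ^ 2 := hx
  refine le_of_mul_le_mul_left ?_ (by nlinarith : 0 < 1 - κ ^ 2)
  linarith
end

section
/- Let κ ∈ (0,1). For all real numbers r₁, r₂ ≥ 0 and x₁, x₂ ≥ 0 with x₁² + x₂² = 1, it holds that (1 − κ)(r₁² + r₂²) − (max(r₁ − x₁, 0))² − (max(r₂ − x₂, 0))² ≤ (1 − κ)/κ. -/
lemma aux4 (κ r x : ℝ) (h0 : 0 < κ) (h1 : κ < 1) (hr : 0 ≤ r) (hx : 0 ≤ x) :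
    (1 - κ) * r ^ 2 - max (r - x) 0 ^ 2 ≤ (1 - κ) / κ * x ^ 2 := by
  rw [div_mul_eq_mul_div, le_div_iff₀ h0]
  rcases le_total r x with h | h
  · rw [max_eq_right (by linarith)]
    have h2 : r ^ 2 ≤ x ^ 2 := by nlinarith
    nlinarith [mul_nonneg (sub_nonneg.2 h1.le) (sub_nonneg.2 h2),
      mul_nonneg (mul_nonneg h0.le (sub_nonneg.2 h1.le)) (sq_nonneg r)]
  · rw [max_eq_left (by linarith)]
    nlinarith [sq_nonneg (κ * r - x)]

/-- For `κ ∈ (0,1)`, all `r₁, r₂ ≥ 0` and `x₁, x₂ ≥ 0` with `x₁² + x₂² = 1`,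
`(1 − κ)(r₁² + r₂²) − (max (r₁ − x₁) 0)² − (max (r₂ − x₂) 0)² ≤ (1 − κ)/κ`. -/
theorem stmt4 (κ r₁ r₂ x₁ x₂ : ℝ) (hκ : κ ∈ Set.Ioo (0:ℝ) 1)
    (hr₁ : 0 ≤ r₁) (hr₂ : 0 ≤ r₂) (hx₁ : 0 ≤ x₁) (hx₂ : 0 ≤ x₂)
    (hx : x₁ ^ 2 + x₂ ^ 2 = 1) :
    (1 - κ) * (r₁ ^ 2 + r₂ ^ 2) - max (r₁ - x₁) 0 ^ 2 - max (r₂ - x₂) 0 ^ 2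
      ≤ (1 - κ) / κ := by
  obtain ⟨h0, h1⟩ := hκ
  have a1 := aux4 κ r₁ x₁ h0 h1 hr₁ hx₁
  have a2 := aux4 κ r₂ x₂ h0 h1 hr₂ hx₂
  have : (1 - κ) / κ * x₁ ^ 2 + (1 - κ) / κ * x₂ ^ 2 = (1 - κ) / κ := by
    rw [← mul_add, hx, mul_one]
  linarith
end

section
/- Let μ be a probability measure on the measurable space Ω, let Q be a probability measure, L : Ω → [0,∞) a measurable function with a measurable L̃ satisfying 0 ≤ L̃ ≤ L, ∫ L̃ dQ = 1 − o(1) and ∫ L̃² dQ ≤ C for a fixed constant C. If P is the measure with density L with respect to Q, then for any sequence of events A_n with Q(A_n) → 0, one has P(A_n) → 0 (i.e., P is contiguous with respect to Q). -/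
open MeasureTheory Filter
open scoped ENNReal

/-!
Split `P(A) = ∫_A L dQ` as `∫_A (L - L̃) dQ + ∫_A L̃ dQ`. The first term is at most the mass gap
`1 - ∫ L̃ dQ`, and by Cauchy–Schwarz the second is at most `√(∫ L̃² dQ · Q(A)) ≤ √(C · Q(A))`;
both bounds tend to `0`.
-/

namespace MeasureTheory

variable {α : Type*} [MeasurableSpace α] {μ : Measure α}

theorem setLIntegral_le_rpow_lintegral_sq_mul_measure {f : α → ℝ≥0∞} (hf : AEMeasurable f μ)
    (s : Set α) : ∫⁻ x in s, f x ∂μ ≤ ((∫⁻ x, f x ^ 2 ∂μ) * μ s) ^ (1 / 2 : ℝ) := by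
  have holder := ENNReal.lintegral_mul_le_Lp_mul_Lq (μ.restrict s) Real.HolderConjugate.two_two
    hf.restrict (aemeasurable_const (b := (1 : ℝ≥0∞)))
  simp only [Pi.mul_apply, mul_one, lintegral_const, Measure.restrict_apply_univ,
    ENNReal.rpow_two, one_pow, one_mul] at holder
  rw [ENNReal.mul_rpow_of_nonneg _ _ (by norm_num)]
  exact holder.trans
    (mul_le_mul_left (ENNReal.rpow_le_rpow (setLIntegral_le_lintegral s _) one_half_pos.le) _)

theorem setLIntegral_le_lintegral_sub_add_setLIntegral {f g : α → ℝ≥0∞} (hg : AEMeasurable g μ)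
    (hg_fin : ∫⁻ x, g x ∂μ ≠ ∞) (hgf : g ≤ᵐ[μ] f) (s : Set α) :
    ∫⁻ x in s, f x ∂μ ≤ (∫⁻ x, f x ∂μ - ∫⁻ x, g x ∂μ) + ∫⁻ x in s, g x ∂μ := by
  calc ∫⁻ x in s, f x ∂μ ≤ ∫⁻ x in s, (f x - g x) + g x ∂μ :=
        lintegral_mono fun x => le_tsub_add
    _ = ∫⁻ x in s, (f x - g x) ∂μ + ∫⁻ x in s, g x ∂μ := lintegral_add_right' _ hg.restrict
    _ ≤ ∫⁻ x, (f x - g x) ∂μ + ∫⁻ x in s, g x ∂μ :=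
        add_le_add_left (setLIntegral_le_lintegral s _) _
    _ = (∫⁻ x, f x ∂μ - ∫⁻ x, g x ∂μ) + ∫⁻ x in s, g x ∂μ := by rw [lintegral_sub' hg hg_fin hgf]

theorem withDensity_apply_le_of_le {f g : α → ℝ≥0∞} (hg : AEMeasurable g μ)
    (hg_fin : ∫⁻ x, g x ∂μ ≠ ∞) (hgf : g ≤ᵐ[μ] f) {s : Set α} (hs : MeasurableSet s) :
    μ.withDensity f s ≤
      (∫⁻ x, f x ∂μ - ∫⁻ x, g x ∂μ) + ((∫⁻ x, g x ^ 2 ∂μ) * μ s) ^ (1 / 2 : ℝ) := by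
  rw [withDensity_apply _ hs]
  exact (setLIntegral_le_lintegral_sub_add_setLIntegral hg hg_fin hgf s).trans
    (add_le_add_right (setLIntegral_le_rpow_lintegral_sq_mul_measure hg s) _)

end MeasureTheory

theorem stmt7_general {Ω : Type*} [MeasurableSpace Ω]
    (Q : ℕ → Measure Ω)
    (L Lt : ℕ → Ω → ℝ≥0∞)
    (hLt : ∀ n, Measurable (Lt n))
    (hle : ∀ n ω, Lt n ω ≤ L n ω)
    (hmean : Tendsto (fun n => ∫⁻ ω, Lt n ω ∂(Q n)) atTop (nhds 1))
    (C : ℝ≥0∞) (hC : C < ⊤)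
    (hsecond : ∀ n, ∫⁻ ω, (Lt n ω) ^ 2 ∂(Q n) ≤ C)
    (hPprob : ∀ n, IsProbabilityMeasure ((Q n).withDensity (L n)))
    (A : ℕ → Set Ω) (hA : ∀ n, MeasurableSet (A n))
    (hQA : Tendsto (fun n => Q n (A n)) atTop (nhds 0)) :
    Tendsto (fun n => (Q n).withDensity (L n) (A n)) atTop (nhds 0) := by
  have hL_mass (n : ℕ) : ∫⁻ ω, L n ω ∂(Q n) = 1 := by
    simpa [withDensity_apply _ MeasurableSet.univ] using (hPprob n).measure_univ
  have hLt_fin (n : ℕ) : ∫⁻ ω, Lt n ω ∂(Q n) ≠ ∞ :=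
    ((lintegral_mono (hle n)).trans_eq (hL_mass n)).trans_lt ENNReal.one_lt_top |>.ne
  have hbound (n : ℕ) : (Q n).withDensity (L n) (A n) ≤
      (1 - ∫⁻ ω, Lt n ω ∂(Q n)) + (C * Q n (A n)) ^ (1 / 2 : ℝ) := by
    refine (withDensity_apply_le_of_le (hLt n).aemeasurable (hLt_fin n)
      (ae_of_all _ (hle n)) (hA n)).trans ?_
    rw [hL_mass n]
    gcongr
    exact hsecond n
  have hgap : Tendsto (fun n => 1 - ∫⁻ ω, Lt n ω ∂(Q n)) atTop (nhds 0) := by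
    simpa using ENNReal.Tendsto.sub tendsto_const_nhds hmean (Or.inl ENNReal.one_ne_top)
  have hsqrt : Tendsto (fun n => (C * Q n (A n)) ^ (1 / 2 : ℝ)) atTop (nhds 0) := by
    have := ((ENNReal.continuous_rpow_const (y := 1 / 2)).tendsto 0).comp
      (by simpa using ENNReal.Tendsto.const_mul hQA (Or.inr hC.ne))
    simpa [Function.comp_def] using this
  exact tendsto_of_tendsto_of_tendsto_of_le_of_le tendsto_const_nhds
    (by simpa using hgap.add hsqrt) (fun n => zero_le) hbound

/-- Contiguity via a truncated second moment: if `0 ≤ L̃ ≤ L`,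
`∫ L̃ dQ = 1 − o(1)`, `∫ L̃² dQ ≤ C < ∞`, and `P = Q.withDensity L` is a
probability measure, then `Q(Aₙ) → 0` implies `P(Aₙ) → 0`. -/
theorem stmt7 {Ω : Type*} [MeasurableSpace Ω]
    (Q : ℕ → Measure Ω) (hQprob : ∀ n, IsProbabilityMeasure (Q n))
    (L Lt : ℕ → Ω → ℝ≥0∞)
    (hL : ∀ n, Measurable (L n)) (hLt : ∀ n, Measurable (Lt n))
    (hle : ∀ n ω, Lt n ω ≤ L n ω)
    (hmean : Tendsto (fun n => ∫⁻ ω, Lt n ω ∂(Q n)) atTop (nhds 1))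
    (C : ℝ≥0∞) (hC : C < ⊤)
    (hsecond : ∀ n, ∫⁻ ω, (Lt n ω) ^ 2 ∂(Q n) ≤ C)
    (hPprob : ∀ n, IsProbabilityMeasure ((Q n).withDensity (L n)))
    (A : ℕ → Set Ω) (hA : ∀ n, MeasurableSet (A n))
    (hQA : Tendsto (fun n => Q n (A n)) atTop (nhds 0)) :
    Tendsto (fun n => (Q n).withDensity (L n) (A n)) atTop (nhds 0) :=
  stmt7_general Q L Lt hLt hle hmean C hC hsecond hPprob A hA hQA
end

section
/- Let κ ∈ (0,1), τ_m, τ_k > 0 with κ⁴ τ_m τ_k = 1, and λ* = (1−κ²)/κ. Suppose real numbers r*, s* ∈ [−1/λ*, 0) and d* = 1 − κ(r*+s*) − (1−κ²)r*s* > 0 satisfy (1 + λ* r*)·d* = −τ_m κ (1 + λ* s*) r* and (1 + λ* s*)·d* = −τ_k κ (1 + λ* r*) s*. Then r* = s* = −1/λ*. -/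
/-- Uniqueness of the edge limits for the CCA Stieltjes transforms: with
`κ ∈ (0,1)`, `κ⁴ τ_m τ_k = 1`, `λ* = (1−κ²)/κ`, if `r*, s* ∈ [−1/λ*, 0)` and
`d* = 1 − κ(r*+s*) − (1−κ²)r*s* > 0` satisfy the two edge equations, then
`r* = s* = −1/λ*`. -/
theorem stmt9 (κ τm τk : ℝ) (hκ : κ ∈ Set.Ioo (0:ℝ) 1) (hτm : 0 < τm) (hτk : 0 < τk)
    (hκτ : κ ^ 4 * τm * τk = 1)
    (lam r s d : ℝ) (hlam : lam = (1 - κ ^ 2) / κ)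
    (hr : r ∈ Set.Ico (-(1 / lam)) 0) (hs : s ∈ Set.Ico (-(1 / lam)) 0)
    (hd : d = 1 - κ * (r + s) - (1 - κ ^ 2) * r * s) (hdpos : 0 < d)
    (h1 : (1 + lam * r) * d = -(τm * κ * (1 + lam * s) * r))
    (h2 : (1 + lam * s) * d = -(τk * κ * (1 + lam * r) * s)) :
    r = -(1 / lam) ∧ s = -(1 / lam) := by
  obtain ⟨hκ0, hκ1⟩ := hκ
  obtain ⟨hr1, hr2⟩ := hr
  obtain ⟨hs1, hs2⟩ := hs
  have h1κ : (0:ℝ) < 1 - κ ^ 2 := by nlinarith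
  have hlampos : 0 < lam := by rw [hlam]; positivity
  have hlamne : lam ≠ 0 := ne_of_gt hlampos
  have hκne : κ ≠ 0 := ne_of_gt hκ0
  have hinv : lam * (1 / lam) = 1 := mul_one_div_cancel hlamne
  have hlamκ : lam * κ = 1 - κ ^ 2 := by rw [hlam]; field_simp
  have ha0 : 0 ≤ 1 + lam * r := by
    nlinarith [mul_nonneg hlampos.le (show 0 ≤ r + 1 / lam by linarith)]
  have hb0 : 0 ≤ 1 + lam * s := by
    nlinarith [mul_nonneg hlampos.le (show 0 ≤ s + 1 / lam by linarith)]
  -- helper: from a factor being zero conclude the value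
  have hval : ∀ x : ℝ, 1 + lam * x = 0 → x = -(1 / lam) := by
    intro x hx
    field_simp
    linarith
  by_cases hA : 1 + lam * r = 0
  · refine ⟨hval r hA, hval s ?_⟩
    rw [hA] at h2
    have : (1 + lam * s) * d = 0 := by rw [h2]; ring
    rcases mul_eq_zero.mp this with h | h
    · exact h
    · exact absurd h (ne_of_gt hdpos)
  by_cases hB : 1 + lam * s = 0
  · refine ⟨?_, hval s hB⟩
    rw [hB] at h1
    have : (1 + lam * r) * d = 0 := by rw [h1]; ring
    rcases mul_eq_zero.mp this with h | h
    · exact hval r h ▸ rfl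
    · exact absurd h (ne_of_gt hdpos)
  exfalso
  have haPos : 0 < 1 + lam * r := lt_of_le_of_ne ha0 (Ne.symm hA)
  have hbPos : 0 < 1 + lam * s := lt_of_le_of_ne hb0 (Ne.symm hB)
  -- multiply the two equations and cancel
  have h3 : ((1 + lam * r) * d) * ((1 + lam * s) * d)
      = (-(τm * κ * (1 + lam * s) * r)) * (-(τk * κ * (1 + lam * r) * s)) := by
    rw [h1, h2]
  have hab : (1 + lam * r) * (1 + lam * s) ≠ 0 :=
    ne_of_gt (mul_pos haPos hbPos)
  have hmul : (1 + lam * r) * (1 + lam * s) * d ^ 2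
      = (1 + lam * r) * (1 + lam * s) * (τm * τk * κ ^ 2 * r * s) := by
    linear_combination h3
  have key : d ^ 2 = τm * τk * κ ^ 2 * r * s := mul_left_cancel₀ hab hmul
  have hrs : κ ^ 2 * d ^ 2 = r * s := by
    linear_combination κ ^ 2 * key + r * s * hκτ
  clear h1 h2 h3 hmul key hκτ hτm hτk hA hB hab hval hinv
  -- strict upper bounds on -r, -s
  have hu : 0 < κ + (1 - κ ^ 2) * r := by
    have h := mul_pos hκ0 haPos
    nlinarith [hlamκ]
  have hv : 0 < κ + (1 - κ ^ 2) * s := by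
    have h := mul_pos hκ0 hbPos
    nlinarith [hlamκ]
  have hrsub : r * s * (1 - κ ^ 2) ^ 2 < κ ^ 2 := by
    have h1' : -r * (1 - κ ^ 2) < κ := by linarith
    have h2' : -s * (1 - κ ^ 2) < κ := by linarith
    have hnn : 0 ≤ -r * (1 - κ ^ 2) := mul_nonneg (neg_nonneg.mpr hr2.le) h1κ.le
    have hnn2 : 0 ≤ -s * (1 - κ ^ 2) := mul_nonneg (neg_nonneg.mpr hs2.le) h1κ.le
    linarith [mul_lt_mul'' h1' h2' hnn hnn2]
  have hdub : (1 - κ ^ 2) * d < 1 := by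
    have hrs2 : (1 - κ ^ 2) ^ 2 * (κ ^ 2 * d ^ 2) = (1 - κ ^ 2) ^ 2 * (r * s) := by
      rw [hrs]
    have hq : (1 - κ ^ 2) ^ 2 * d ^ 2 < 1 := by
      nlinarith [hrs2, hrsub, mul_pos hκ0 hκ0]
    nlinarith [mul_pos h1κ hdpos]
  have hsum : r + s ≤ -(2 * κ * d) := by
    nlinarith [sq_nonneg (r - s), mul_pos hκ0 hdpos]
  have h' : d ≥ 1 + 2 * κ ^ 2 * d - (1 - κ ^ 2) * κ ^ 2 * d ^ 2 := by
    nlinarith [mul_le_mul_of_nonneg_left hsum hκ0.le]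
  have hfac : 0 ≤ ((1 - κ ^ 2) * d - 1) * (κ ^ 2 * d + 1) := by linarith [h']
  have hpos : 0 < κ ^ 2 * d + 1 := by positivity
  have hneg : (1 - κ ^ 2) * d - 1 < 0 := by linarith
  have := mul_neg_of_neg_of_pos hneg hpos
  linarith
end

section
/- Let 0 < α, β < 1, let κ = ((1−α²)(1−β²)/(α²β²))^{1/4}, and assume κ ∈ (0,1). Suppose ν₁, ν₂ ≥ 0 and c₁ = α²ν₁, c₂ = β²ν₂, Δ = 1 + c₁ + c₂ + (1−κ²)c₁c₂ satisfy ν₁Δ = c₁ + κ²c₂ + (1−κ²)c₁c₂ and ν₂Δ = κ²c₁ + c₂ + (1−κ²)c₁c₂. Then ν₁ = ν₂ = 0. -/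
/-!
Write `a = α²`, `b = β²`, `k = κ²`. If `ν₁ = 0` the first equation collapses to `k c₂ = 0`, so
`ν₂ = 0`, and symmetrically. If both are positive, `ν₁ - c₁ = ν₁(1 - a)` turns the first equation
into `ν₁(1 - a) = k c₂ + (1 - k) c₁ c₂ - ν₁(c₁ + c₂ + (1 - k) c₁ c₂) < k c₂`, because
`c₁ < ν₁`; likewise `ν₂(1 - b) < k c₁`. Multiplying gives `(1 - a)(1 - b) < k² a b`,
whereas `k² a b = (1 - a)(1 - b)` is the definition of `κ`.
-/

lemma mul_one_sub_lt_of_fixedPoint {a k ν d : ℝ} (ha₀ : 0 ≤ a) (ha₁ : a < 1) (hk₀ : 0 ≤ k)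
    (hk₁ : k ≤ 1) (hν : 0 < ν) (hd : 0 < d)
    (h : ν * (1 + a * ν + d + (1 - k) * (a * ν) * d) = a * ν + k * d + (1 - k) * (a * ν) * d) :
    ν * (1 - a) < k * d := by
  have hc : 0 ≤ a * ν := by positivity
  have hcν : a * ν < ν := mul_lt_of_lt_one_left hν ha₁
  have hcd : (1 - k) * (a * ν) * d ≤ a * ν * d := by
    rw [mul_assoc]; exact mul_le_of_le_one_left (by positivity) (by linarith)
  have hνcd : 0 ≤ ν * ((1 - k) * (a * ν) * d) := by
    have : 0 ≤ 1 - k := by linarith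
    positivity
  linarith [mul_lt_mul_of_pos_right hcν hd, mul_nonneg hν.le hc]

lemma eq_zero_of_fixedPoint_of_eq_zero {a b k ν μ Δ : ℝ} (hb : b ≠ 0) (hk : k ≠ 0)
    (h : ν * Δ = a * ν + k * (b * μ) + (1 - k) * (a * ν) * (b * μ)) (hν : ν = 0) : μ = 0 := by
  subst hν
  simp_all

lemma pow_four_mul_eq_of_eq_rpow_one_div_four {κ p r : ℝ} (hp : 0 ≤ p) (hr : 0 < r)
    (h : κ = (p / r) ^ ((1 : ℝ) / 4)) : κ ^ 4 * r = p := by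
  have hpr : 0 ≤ p / r := by positivity
  rw [h, one_div, ← Nat.cast_ofNat, Real.rpow_inv_natCast_pow hpr four_ne_zero,
    div_mul_cancel₀ _ hr.ne']

/-- Edge uniqueness for the correlated spiked Wigner deterministic system:
with `κ = ((1−α²)(1−β²)/(α²β²))^{1/4} ∈ (0,1)`, `ν₁, ν₂ ≥ 0`,
`c₁ = α²ν₁`, `c₂ = β²ν₂`, `Δ = 1 + c₁ + c₂ + (1−κ²)c₁c₂`, the two equations
force `ν₁ = ν₂ = 0`. -/
theorem stmt10 (α β : ℝ) (hα : α ∈ Set.Ioo (0:ℝ) 1) (hβ : β ∈ Set.Ioo (0:ℝ) 1)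
    (κ : ℝ) (hκdef : κ = ((1 - α ^ 2) * (1 - β ^ 2) / (α ^ 2 * β ^ 2)) ^ ((1 : ℝ) / 4))
    (hκ : κ ∈ Set.Ioo (0:ℝ) 1)
    (ν₁ ν₂ : ℝ) (hν₁ : 0 ≤ ν₁) (hν₂ : 0 ≤ ν₂)
    (c₁ c₂ Δ : ℝ) (hc₁ : c₁ = α ^ 2 * ν₁) (hc₂ : c₂ = β ^ 2 * ν₂)
    (hΔ : Δ = 1 + c₁ + c₂ + (1 - κ ^ 2) * c₁ * c₂)
    (h1 : ν₁ * Δ = c₁ + κ ^ 2 * c₂ + (1 - κ ^ 2) * c₁ * c₂)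
    (h2 : ν₂ * Δ = κ ^ 2 * c₁ + c₂ + (1 - κ ^ 2) * c₁ * c₂) :
    ν₁ = 0 ∧ ν₂ = 0 := by
  obtain ⟨hα₀, hα₁⟩ := hα
  obtain ⟨hβ₀, hβ₁⟩ := hβ
  obtain ⟨hκ₀, hκ₁⟩ := hκ
  have ha : α ^ 2 < 1 := pow_lt_one₀ hα₀.le hα₁ two_ne_zero
  have hb : β ^ 2 < 1 := pow_lt_one₀ hβ₀.le hβ₁ two_ne_zero
  have hk : κ ^ 2 ≤ 1 := pow_le_one₀ hκ₀.le hκ₁.le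
  have hκ4 : κ ^ 4 * (α ^ 2 * β ^ 2) = (1 - α ^ 2) * (1 - β ^ 2) :=
    pow_four_mul_eq_of_eq_rpow_one_div_four (by nlinarith) (by positivity) hκdef
  have hk₀ : 0 < κ ^ 2 := by positivity
  subst hc₁ hc₂ hΔ
  rcases hν₁.eq_or_lt with hν₁ | hν₁
  · exact ⟨hν₁.symm, eq_zero_of_fixedPoint_of_eq_zero (by positivity) hk₀.ne' h1 hν₁.symm⟩
  have h2' : ν₂ * (1 + β ^ 2 * ν₂ + α ^ 2 * ν₁ + (1 - κ ^ 2) * (β ^ 2 * ν₂) * (α ^ 2 * ν₁))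
      = β ^ 2 * ν₂ + κ ^ 2 * (α ^ 2 * ν₁) + (1 - κ ^ 2) * (β ^ 2 * ν₂) * (α ^ 2 * ν₁) := by
    linear_combination h2
  rcases hν₂.eq_or_lt with hν₂ | hν₂
  · exact absurd (eq_zero_of_fixedPoint_of_eq_zero (by positivity) hk₀.ne' h2' hν₂.symm)
      hν₁.ne'
  have e₁ := mul_one_sub_lt_of_fixedPoint (by positivity) ha hk₀.le hk hν₁ (by positivity) h1
  have e₂ := mul_one_sub_lt_of_fixedPoint (by positivity) hb hk₀.le hk hν₂ (by positivity) h2'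
  have hprod := mul_lt_mul'' e₁ e₂ (mul_nonneg hν₁.le (by linarith))
    (mul_nonneg hν₂.le (by linarith))
  have hprod_eq : κ ^ 2 * (β ^ 2 * ν₂) * (κ ^ 2 * (α ^ 2 * ν₁))
      = ν₁ * (1 - α ^ 2) * (ν₂ * (1 - β ^ 2)) := by
    linear_combination ν₁ * ν₂ * hκ4
  exact absurd hprod_eq hprod.ne'
end

section
/- Let 0 < α, β with τα² < 1, τβ² < 1 for some τ > 0, and let κ = ((1−τα²)(1−τβ²)/(τ²α²β²))^{1/4} with κ ∈ (0,1). Suppose ν₁, ν₂ > 0 and set c₁ = τα²ν₁/(1+αν₁), c₂ = τβ²ν₂/(1+βν₂), Δ = 1 + c₁ + c₂ + (1−κ²)c₁c₂. If ν₁Δ = c₁ + κ²c₂ + (1−κ²)c₁c₂ and ν₂Δ = κ²c₁ + c₂ + (1−κ²)c₁c₂, then a contradiction follows; hence no such positive ν₁, ν₂ exist. -/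
set_option maxHeartbeats 1000000 in
/-- Edge uniqueness for the correlated spiked Wishart deterministic system:
with `κ = ((1−τα²)(1−τβ²)/(τ²α²β²))^{1/4} ∈ (0,1)`, no positive `ν₁, ν₂`
can satisfy the two edge equations. -/
theorem stmt11 (τ α β : ℝ) (hτ : 0 < τ) (hα : 0 < α) (hβ : 0 < β)
    (hτα : τ * α ^ 2 < 1) (hτβ : τ * β ^ 2 < 1)
    (κ : ℝ)
    (hκdef : κ = ((1 - τ * α ^ 2) * (1 - τ * β ^ 2) / (τ ^ 2 * α ^ 2 * β ^ 2)) ^ ((1 : ℝ) / 4))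
    (hκ : κ ∈ Set.Ioo (0:ℝ) 1)
    (ν₁ ν₂ : ℝ) (hν₁ : 0 < ν₁) (hν₂ : 0 < ν₂)
    (c₁ c₂ Δ : ℝ)
    (hc₁ : c₁ = τ * α ^ 2 * ν₁ / (1 + α * ν₁)) (hc₂ : c₂ = τ * β ^ 2 * ν₂ / (1 + β * ν₂))
    (hΔ : Δ = 1 + c₁ + c₂ + (1 - κ ^ 2) * c₁ * c₂)
    (h1 : ν₁ * Δ = c₁ + κ ^ 2 * c₂ + (1 - κ ^ 2) * c₁ * c₂)
    (h2 : ν₂ * Δ = κ ^ 2 * c₁ + c₂ + (1 - κ ^ 2) * c₁ * c₂) :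
    False := by
  obtain ⟨hκ0, hκ1⟩ := hκ
  have h1a : (0:ℝ) < 1 - τ * α ^ 2 := by linarith
  have h1b : (0:ℝ) < 1 - τ * β ^ 2 := by linarith
  have hd1 : (0:ℝ) < 1 + α * ν₁ := by positivity
  have hd2 : (0:ℝ) < 1 + β * ν₂ := by positivity
  have hc₁p : 0 < c₁ := by rw [hc₁]; positivity
  have hc₂p : 0 < c₂ := by rw [hc₂]; positivity
  have hκ2p : 0 < κ ^ 2 := by positivity
  have hκ2 : κ ^ 2 < 1 := pow_lt_one₀ hκ0.le hκ1 (by norm_num)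
  have hk2' : (0:ℝ) < 1 - κ ^ 2 := by linarith
  -- κ^4 identity
  have hxpos : 0 < (1 - τ * α ^ 2) * (1 - τ * β ^ 2) / (τ ^ 2 * α ^ 2 * β ^ 2) := by
    apply div_pos (mul_pos h1a h1b); positivity
  have hκ4 : κ ^ 4 = (1 - τ * α ^ 2) * (1 - τ * β ^ 2) / (τ ^ 2 * α ^ 2 * β ^ 2) := by
    rw [hκdef, ← Real.rpow_natCast _ 4, ← Real.rpow_mul hxpos.le]
    norm_num
  have hκ4' : κ ^ 4 * (τ ^ 2 * α ^ 2 * β ^ 2) = (1 - τ * α ^ 2) * (1 - τ * β ^ 2) := by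
    rw [hκ4]; field_simp
  clear hκdef hκ4 hxpos
  -- cleared-denominator forms of c₁, c₂
  have hcd₁ : c₁ * (1 + α * ν₁) = τ * α ^ 2 * ν₁ := by
    rw [hc₁]; field_simp
  have hcd₂ : c₂ * (1 + β * ν₂) = τ * β ^ 2 * ν₂ := by
    rw [hc₂]; field_simp
  clear hc₁ hc₂
  -- Δ > 0 and ν₁, ν₂ < 1
  have hΔp : 0 < Δ := by rw [hΔ]; linarith [mul_pos hk2' (mul_pos hc₁p hc₂p)]
  have e₁ : (1 - ν₁) * Δ = 1 + (1 - κ ^ 2) * c₂ := by linear_combination hΔ - h1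
  have e₂ : (1 - ν₂) * Δ = 1 + (1 - κ ^ 2) * c₁ := by linear_combination hΔ - h2
  have hmp₁ : 0 < (1 - ν₁) * Δ := by rw [e₁]; linarith [mul_pos hc₂p hk2']
  have hmp₂ : 0 < (1 - ν₂) * Δ := by rw [e₂]; linarith [mul_pos hc₁p hk2']
  have hν₁1 : ν₁ < 1 := by
    by_contra h; push_neg at h
    linarith [hmp₁, mul_nonneg (by linarith : (0:ℝ) ≤ ν₁ - 1) hΔp.le]
  have hν₂1 : ν₂ < 1 := by
    by_contra h; push_neg at h
    linarith [hmp₂, mul_nonneg (by linarith : (0:ℝ) ≤ ν₂ - 1) hΔp.le]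
  -- key equation forms
  have eq1 : κ ^ 2 * c₂ = ν₁ * (1 + c₂) + (ν₁ - 1) * c₁ * (1 + (1 - κ ^ 2) * c₂) := by
    linear_combination ν₁ * hΔ - h1
  have eq2 : κ ^ 2 * c₁ = ν₂ * (1 + c₁) + (ν₂ - 1) * c₂ * (1 + (1 - κ ^ 2) * c₁) := by
    linear_combination ν₂ * hΔ - h2
  -- lower bounds
  have hb1' : ((ν₁ - 1) * c₁ + τ * α ^ 2 * ν₁) * (1 + α * ν₁) = τ * α ^ 2 * ν₁ ^ 2 * (1 + α) := by
    linear_combination (ν₁ - 1) * hcd₁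
  have hb1 : 0 < (ν₁ - 1) * c₁ + τ * α ^ 2 * ν₁ := by
    by_contra h; push_neg at h
    have h' := mul_nonneg (neg_nonneg.mpr h) hd1.le
    have hp : 0 < τ * α ^ 2 * ν₁ ^ 2 * (1 + α) := by positivity
    linarith [hb1', h', hp]
  have hb2' : ((ν₂ - 1) * c₂ + τ * β ^ 2 * ν₂) * (1 + β * ν₂) = τ * β ^ 2 * ν₂ ^ 2 * (1 + β) := by
    linear_combination (ν₂ - 1) * hcd₂
  have hb2 : 0 < (ν₂ - 1) * c₂ + τ * β ^ 2 * ν₂ := by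
    by_contra h; push_neg at h
    have h' := mul_nonneg (neg_nonneg.mpr h) hd2.le
    have hp : 0 < τ * β ^ 2 * ν₂ ^ 2 * (1 + β) := by positivity
    linarith [hb2', h', hp]
  have hfac1 : (0:ℝ) ≤ 1 - τ * α ^ 2 * (1 - κ ^ 2) := by
    have : τ * α ^ 2 * (1 - κ ^ 2) ≤ τ * α ^ 2 * 1 :=
      mul_le_mul_of_nonneg_left (by linarith) (by positivity)
    linarith
  have hfac2 : (0:ℝ) ≤ 1 - τ * β ^ 2 * (1 - κ ^ 2) := by
    have : τ * β ^ 2 * (1 - κ ^ 2) ≤ τ * β ^ 2 * 1 :=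
      mul_le_mul_of_nonneg_left (by linarith) (by positivity)
    linarith
  have hpos1 : 0 < 1 + (1 - κ ^ 2) * c₁ := by linarith [mul_pos hk2' hc₁p]
  have hpos2 : 0 < 1 + (1 - κ ^ 2) * c₂ := by linarith [mul_pos hk2' hc₂p]
  have t1 : 0 ≤ ν₁ * c₂ * (1 - τ * α ^ 2 * (1 - κ ^ 2)) :=
    mul_nonneg (mul_nonneg hν₁.le hc₂p.le) hfac1
  have t2 : 0 < ((ν₁ - 1) * c₁ + τ * α ^ 2 * ν₁) * (1 + (1 - κ ^ 2) * c₂) := mul_pos hb1 hpos2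
  have key1 : ν₁ * (1 - τ * α ^ 2) < κ ^ 2 * c₂ := by linarith [t1, t2, eq1]
  have s1 : 0 ≤ ν₂ * c₁ * (1 - τ * β ^ 2 * (1 - κ ^ 2)) :=
    mul_nonneg (mul_nonneg hν₂.le hc₁p.le) hfac2
  have s2 : 0 < ((ν₂ - 1) * c₂ + τ * β ^ 2 * ν₂) * (1 + (1 - κ ^ 2) * c₁) := mul_pos hb2 hpos1
  have key2 : ν₂ * (1 - τ * β ^ 2) < κ ^ 2 * c₁ := by linarith [s1, s2, eq2]
  -- upper bounds
  have up2 : c₂ < τ * β ^ 2 * ν₂ := by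
    have h' := mul_pos hc₂p (mul_pos hβ hν₂)
    linarith [hcd₂, h']
  have up1 : c₁ < τ * α ^ 2 * ν₁ := by
    have h' := mul_pos hc₁p (mul_pos hα hν₁)
    linarith [hcd₁, h']
  have hA : ν₁ * (1 - τ * α ^ 2) < κ ^ 2 * (τ * β ^ 2 * ν₂) := by
    have := mul_lt_mul_of_pos_left up2 hκ2p
    linarith [key1]
  have hB : ν₂ * (1 - τ * β ^ 2) < κ ^ 2 * (τ * α ^ 2 * ν₁) := by
    have := mul_lt_mul_of_pos_left up1 hκ2p
    linarith [key2]
  have hApos : 0 < ν₁ * (1 - τ * α ^ 2) := mul_pos hν₁ h1a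
  have hBpos : 0 < ν₂ * (1 - τ * β ^ 2) := mul_pos hν₂ h1b
  have hprod := mul_lt_mul'' hA hB hApos.le hBpos.le
  have hfin : κ ^ 4 * (τ ^ 2 * α ^ 2 * β ^ 2) * (ν₁ * ν₂)
      = (1 - τ * α ^ 2) * (1 - τ * β ^ 2) * (ν₁ * ν₂) := by
    linear_combination (ν₁ * ν₂) * hκ4'
  linarith [hprod, hfin]
end

section
/- Let ε ∈ (0, 1/4) and let α, β ∈ [2ε, 1−2ε]. Then for any α̃ ∈ [α, α+ε²] and β̃ ∈ [β, β+ε²] with α̃, β̃ < 1, setting κ(a,b) = ((1−a²)(1−b²)/(a²b²))^{1/4} and ρ_out = √((1−α̃α)(1−β̃β))/(κ(α̃,β̃)·√(αβα̃β̃)), one has ρ_out < κ(α,β) + ε. -/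
/-!
Write `κ = κ(α, β)` and `κ̃ = κ(α̃, β̃)`. Their fourth powers multiply to `M / (αβα̃β̃)²` with
`M = (1 - α²)(1 - α̃²)(1 - β²)(1 - β̃²)`, so `κ² κ̃² αβα̃β̃ = √M`. Per coordinate,
`(1 - α̃α)² = (1 - α²)(1 - α̃²) + (α̃ - α)²`, and the error `(α̃ - α)² ≤ ε⁴` is at most
`ε²/2` times `(1 - α²)(1 - α̃²) ≥ 2ε²`. Hence
`ρ_out² = (1 - α̃α)(1 - β̃β) κ² / √M ≤ (1 + ε²/2) κ²`, and `(1 + ε²/2) κ² < (κ + ε)²`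
because `κ ≤ 1/(2ε)` when `α, β ≥ 2ε`.
-/

open Real

noncomputable def kappa (a b : ℝ) : ℝ :=
  ((1 - a ^ 2) * (1 - b ^ 2) / (a ^ 2 * b ^ 2)) ^ ((1 : ℝ) / 4)

lemma rpow_one_div_four_sq {x : ℝ} (hx : 0 ≤ x) : (x ^ ((1 : ℝ) / 4)) ^ 2 = √x := by
  rw [← rpow_natCast, ← rpow_mul hx, sqrt_eq_rpow]
  norm_num

lemma rpow_one_div_four_pow_four {x : ℝ} (hx : 0 ≤ x) : (x ^ ((1 : ℝ) / 4)) ^ 4 = x := by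
  rw [← rpow_natCast, ← rpow_mul hx]
  norm_num

section Kappa

variable {a b a' b' : ℝ}

lemma kappa_pos (ha : a ∈ Set.Ioo 0 1) (hb : b ∈ Set.Ioo 0 1) : 0 < kappa a b := by
  obtain ⟨ha0, ha1⟩ := ha
  obtain ⟨hb0, hb1⟩ := hb
  have : 0 < (1 - a ^ 2) * (1 - b ^ 2) := mul_pos (by nlinarith) (by nlinarith)
  exact rpow_pos_of_pos (by positivity) _

lemma kappa_sq_mul_kappa_sq_mul (ha : a ∈ Set.Ioc 0 1) (hb : b ∈ Set.Ioc 0 1)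
    (ha' : a' ∈ Set.Ioc 0 1) (hb' : b' ∈ Set.Ioc 0 1) :
    kappa a b ^ 2 * kappa a' b' ^ 2 * (a * b * a' * b') =
      √((1 - a ^ 2) * (1 - a' ^ 2) * ((1 - b ^ 2) * (1 - b' ^ 2))) := by
  obtain ⟨ha0, ha1⟩ := ha
  obtain ⟨hb0, hb1⟩ := hb
  obtain ⟨ha0', ha1'⟩ := ha'
  obtain ⟨hb0', hb1'⟩ := hb'
  have hab : 0 ≤ (1 - a ^ 2) * (1 - b ^ 2) := mul_nonneg (by nlinarith) (by nlinarith)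
  have hab' : 0 ≤ (1 - a' ^ 2) * (1 - b' ^ 2) := mul_nonneg (by nlinarith) (by nlinarith)
  have hP : 0 ≤ a * b * a' * b' := by positivity
  rw [kappa, kappa, rpow_one_div_four_sq (by positivity), rpow_one_div_four_sq (by positivity),
    ← sqrt_sq hP, ← sqrt_mul (by positivity), ← sqrt_mul (by positivity)]
  congr 1
  field_simp

lemma two_mul_mul_kappa_le_one {ε : ℝ} (hε : 0 < ε) (ha : a ∈ Set.Icc (2 * ε) 1)
    (hb : b ∈ Set.Icc (2 * ε) 1) : 2 * ε * kappa a b ≤ 1 := by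
  obtain ⟨ha0, ha1⟩ := ha
  obtain ⟨hb0, hb1⟩ := hb
  have ha : 0 < a := by linarith
  have hb : 0 < b := by linarith
  have hD : 0 ≤ (1 - a ^ 2) * (1 - b ^ 2) / (a ^ 2 * b ^ 2) :=
    div_nonneg (mul_nonneg (by nlinarith) (by nlinarith)) (by positivity)
  have hnum : (1 - a ^ 2) * (1 - b ^ 2) ≤ 1 :=
    mul_le_one₀ (by nlinarith) (by nlinarith) (by nlinarith)
  have hden : (2 * ε) ^ 4 ≤ a ^ 2 * b ^ 2 := by
    rw [show (2 * ε) ^ 4 = (2 * ε) ^ 2 * (2 * ε) ^ 2 by ring]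
    gcongr
  have hK : 0 ≤ kappa a b := rpow_nonneg hD _
  rw [← pow_le_one_iff_of_nonneg (by positivity) four_ne_zero, mul_pow, kappa,
    rpow_one_div_four_pow_four hD, mul_div_assoc', div_le_one (by positivity)]
  calc (2 * ε) ^ 4 * ((1 - a ^ 2) * (1 - b ^ 2)) ≤ a ^ 2 * b ^ 2 * 1 :=
        mul_le_mul hden hnum (mul_nonneg (by nlinarith) (by nlinarith)) (by positivity)
    _ = a ^ 2 * b ^ 2 := mul_one _

end Kappa

lemma sq_one_sub_mul_le {ε a b : ℝ} (hε0 : 0 ≤ ε) (hε1 : ε ≤ 1) (ha0 : 0 ≤ a)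
    (ha : a ≤ 1 - 2 * ε) (hab : a ≤ b) (hb : b ≤ a + ε ^ 2) :
    (1 - b * a) ^ 2 ≤ (1 + ε ^ 2 / 2) * ((1 - a ^ 2) * (1 - b ^ 2)) := by
  have hA : 2 * ε ≤ 1 - a ^ 2 := by nlinarith
  have hb1 : ε ≤ 1 - b := by nlinarith
  have hB : ε ≤ 1 - b ^ 2 := by nlinarith [mul_nonneg (ha0.trans hab) (hε0.trans hb1)]
  have hAB : 2 * ε ^ 2 ≤ (1 - a ^ 2) * (1 - b ^ 2) := by
    nlinarith [mul_le_mul hA hB hε0 (by linarith)]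
  have hdiff : (b - a) ^ 2 ≤ ε ^ 4 := by nlinarith
  calc (1 - b * a) ^ 2 = (1 - a ^ 2) * (1 - b ^ 2) + (b - a) ^ 2 := by ring
    _ ≤ (1 - a ^ 2) * (1 - b ^ 2) + ε ^ 2 / 2 * ((1 - a ^ 2) * (1 - b ^ 2)) := by nlinarith
    _ = (1 + ε ^ 2 / 2) * ((1 - a ^ 2) * (1 - b ^ 2)) := by ring

lemma mul_le_mul_sqrt_of_sq_le {x y c A B : ℝ} (hc : 0 < c) (hx : x ^ 2 ≤ c * A)
    (hy : y ^ 2 ≤ c * B) : x * y ≤ c * √(A * B) := by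
  have hcA : 0 ≤ c * A := (sq_nonneg x).trans hx
  have hAB : 0 ≤ A * B :=
    mul_nonneg (nonneg_of_mul_nonneg_right hcA hc)
      (nonneg_of_mul_nonneg_right ((sq_nonneg y).trans hy) hc)
  refine (le_abs_self _).trans (abs_le_of_sq_le_sq ?_ (by positivity))
  calc (x * y) ^ 2 = x ^ 2 * y ^ 2 := mul_pow _ _ _
    _ ≤ (c * A) * (c * B) := mul_le_mul hx hy (sq_nonneg y) hcA
    _ = (c * √(A * B)) ^ 2 := by rw [mul_pow, sq_sqrt hAB]; ring

lemma one_add_sq_div_two_mul_sq_lt {ε K : ℝ} (hε : 0 < ε) (hK : 0 ≤ K) (hεK : 2 * ε * K ≤ 1) :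
    (1 + ε ^ 2 / 2) * K ^ 2 < (K + ε) ^ 2 := by
  nlinarith [mul_nonneg (mul_nonneg hε.le hK) (sub_nonneg.2 hεK)]

theorem stmt15_general (ε α β αt βt : ℝ) (hε : ε ∈ Set.Ioo (0:ℝ) (1/4))
    (hα : α ∈ Set.Icc (2*ε) (1 - 2*ε)) (hβ : β ∈ Set.Icc (2*ε) (1 - 2*ε))
    (hαt : αt ∈ Set.Icc α (α + ε ^ 2)) (hβt : βt ∈ Set.Icc β (β + ε ^ 2)) :
    Real.sqrt ((1 - αt * α) * (1 - βt * β)) /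
        ((((1 - αt ^ 2) * (1 - βt ^ 2) / (αt ^ 2 * βt ^ 2)) ^ ((1 : ℝ) / 4)) *
          Real.sqrt (α * β * αt * βt))
      < ((1 - α ^ 2) * (1 - β ^ 2) / (α ^ 2 * β ^ 2)) ^ ((1 : ℝ) / 4) + ε := by
  obtain ⟨hε0, hε4⟩ := hε
  obtain ⟨hα0, hα1⟩ := hα
  obtain ⟨hβ0, hβ1⟩ := hβ
  obtain ⟨hαt0, hαt1⟩ := hαt
  obtain ⟨hβt0, hβt1⟩ := hβt
  have hα_pos : 0 < α := by linarith
  have hβ_pos : 0 < β := by linarith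
  have hαt_lt : αt < 1 := by nlinarith
  have hβt_lt : βt < 1 := by nlinarith
  have hP : 0 < α * β * αt * βt :=
    mul_pos (mul_pos (mul_pos hα_pos hβ_pos) (by linarith)) (by linarith)
  have hεK := two_mul_mul_kappa_le_one hε0 ⟨hα0, by linarith⟩ ⟨hβ0, by linarith⟩
  have hK := kappa_pos (a := α) (b := β) ⟨hα_pos, by linarith⟩ ⟨hβ_pos, by linarith⟩
  have hKt := kappa_pos (a := αt) (b := βt) ⟨by linarith, hαt_lt⟩ ⟨by linarith, hβt_lt⟩
  have hK2Kt2 := kappa_sq_mul_kappa_sq_mul (a := α) (b := β) (a' := αt) (b' := βt)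
    ⟨hα_pos, by linarith⟩ ⟨hβ_pos, by linarith⟩ ⟨by linarith, hαt_lt.le⟩
    ⟨by linarith, hβt_lt.le⟩
  have hN := mul_le_mul_sqrt_of_sq_le (by positivity)
    (sq_one_sub_mul_le hε0.le (by linarith) hα_pos.le hα1 hαt0 hαt1)
    (sq_one_sub_mul_le hε0.le (by linarith) hβ_pos.le hβ1 hβt0 hβt1)
  change √((1 - αt * α) * (1 - βt * β)) / (kappa αt βt * √(α * β * αt * βt)) < kappa α β + ε
  rw [div_lt_iff₀ (by positivity), sqrt_lt' (by positivity)]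
  calc (1 - αt * α) * (1 - βt * β)
      _ ≤ (1 + ε ^ 2 / 2) * √((1 - α ^ 2) * (1 - αt ^ 2) * ((1 - β ^ 2) * (1 - βt ^ 2))) :=
        hN
      _ = (1 + ε ^ 2 / 2) * kappa α β ^ 2 * (kappa αt βt ^ 2 * (α * β * αt * βt)) := by
        rw [← hK2Kt2]; ring
      _ < (kappa α β + ε) ^ 2 * (kappa αt βt ^ 2 * (α * β * αt * βt)) :=
        mul_lt_mul_of_pos_right (one_add_sq_div_two_mul_sq_lt hε0 hK.le hεK) (by positivity)
      _ = ((kappa α β + ε) * (kappa αt βt * √(α * β * αt * βt))) ^ 2 := by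
        rw [mul_pow, mul_pow, sq_sqrt hP.le]

/-- Grid-approximation inequality for parameter-free detection in the
correlated spiked Wigner model: if `ε ∈ (0,1/4)`, `α, β ∈ [2ε, 1−2ε]`,
`α̃ ∈ [α, α+ε²]`, `β̃ ∈ [β, β+ε²]` with `α̃, β̃ < 1`, then the mismatched
threshold `ρ_out` is below `κ(α,β) + ε`. -/
theorem stmt15 (ε α β αt βt : ℝ) (hε : ε ∈ Set.Ioo (0:ℝ) (1/4))
    (hα : α ∈ Set.Icc (2*ε) (1 - 2*ε)) (hβ : β ∈ Set.Icc (2*ε) (1 - 2*ε))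
    (hαt : αt ∈ Set.Icc α (α + ε ^ 2)) (hβt : βt ∈ Set.Icc β (β + ε ^ 2))
    (hαt1 : αt < 1) (hβt1 : βt < 1) :
    Real.sqrt ((1 - αt * α) * (1 - βt * β)) /
        ((((1 - αt ^ 2) * (1 - βt ^ 2) / (αt ^ 2 * βt ^ 2)) ^ ((1 : ℝ) / 4)) *
          Real.sqrt (α * β * αt * βt))
      < ((1 - α ^ 2) * (1 - β ^ 2) / (α ^ 2 * β ^ 2)) ^ ((1 : ℝ) / 4) + ε :=
  stmt15_general ε α β αt βt hε hα hβ hαt hβt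
end

section
/- Let H₀ be a symmetric N×N real matrix with λ_max(H₀) < λ, let B be an N×2 real matrix, Θ a positive definite diagonal 2×2 matrix, H = H₀ + BΘB^T, and suppose x ∈ ℝ² is a nonzero vector with S(λ)x = 0 where S(z) = I₂ + Θ^{1/2}B^T(H₀ − zI)⁻¹BΘ^{1/2}. Then the vector r = (H₀ − λI)⁻¹ B Θ^{1/2} x satisfies H r = λ r, ‖r‖² = x^T S'(λ) x, and B^T r = −Θ^{-1/2} x. -/
/-!
Put `M = H₀ - λ • 1`, invertible because `λ` lies above the spectrum of `H₀`, so that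
`r = M⁻¹ B Θ^{1/2} x`. The kernel equation `S(λ) x = 0` says exactly `Θ^{1/2} Bᵀ r = -x`, whence
`Bᵀ r = -Θ^{-1/2} x`. Then `B Θ Bᵀ r = -B Θ^{1/2} x = -M r`, i.e. `(H₀ + B Θ Bᵀ - λ) r = 0`.
The norm identity is `rᵀ r = xᵀ (M⁻¹ B Θ^{1/2})ᵀ (M⁻¹ B Θ^{1/2}) x` with `M` and `Θ^{1/2}` symmetric.
-/

open Matrix

theorem Matrix.IsHermitian.isUnit_sub_smul_one {n : Type*} [Fintype n] [DecidableEq n]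
    {A : Matrix n n ℝ} (hA : A.IsHermitian) {lam : ℝ} (h : ∀ i, hA.eigenvalues i ≠ lam) :
    IsUnit (A - lam • 1) := by
  have hlam : lam ∉ spectrum ℝ A := by
    rw [hA.spectrum_real_eq_range_eigenvalues]
    rintro ⟨i, hi⟩
    exact h i hi
  rw [spectrum.notMem_iff, Algebra.algebraMap_eq_smul_one] at hlam
  simpa using hlam.neg

namespace Matrix

variable {R : Type*} [CommRing R] {n m : Type*} [Fintype n] [DecidableEq n] [Fintype m]
  [DecidableEq m]

theorem mulVec_eq_neg_of_one_add_mul_mulVec_eq_zero {D E K : Matrix m m R} {x : m → R}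
    (hED : E * D = 1) (h : (1 + D * K) *ᵥ x = 0) : K *ᵥ x = -(E *ᵥ x) := by
  have hDK : (D * K) *ᵥ x = -x := by
    rw [add_mulVec, one_mulVec] at h
    exact eq_neg_of_add_eq_zero_right h
  calc K *ᵥ x = (E * (D * K)) *ᵥ x := by rw [← Matrix.mul_assoc, hED, Matrix.one_mul]
    _ = -(E *ᵥ x) := by rw [← mulVec_mulVec, hDK, mulVec_neg]

theorem mulVec_nonsing_inv_sub_smul_one_mulVec {A : Matrix n n R} {c : R}
    (hA : IsUnit (A - c • 1).det) (v : n → R) :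
    A *ᵥ ((A - c • 1)⁻¹ *ᵥ v) = v + c • ((A - c • 1)⁻¹ *ᵥ v) := by
  calc A *ᵥ ((A - c • 1)⁻¹ *ᵥ v) = (A - c • 1 + c • 1) *ᵥ ((A - c • 1)⁻¹ *ᵥ v) := by
        rw [sub_add_cancel]
    _ = v + c • ((A - c • 1)⁻¹ *ᵥ v) := by
        rw [add_mulVec, mulVec_mulVec, mul_nonsing_inv _ hA, one_mulVec, smul_mulVec, one_mulVec]

theorem IsSymm.nonsing_inv {A : Matrix n n R} (hA : A.IsSymm) : A⁻¹.IsSymm := by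
  rw [IsSymm, transpose_nonsing_inv, hA.eq]

section SchurComplement

variable {H₀ : Matrix n n R} {B : Matrix n m R} {D E Θ : Matrix m m R} {c : R} {x : m → R}

theorem transpose_mulVec_eq_neg_of_schur_mulVec_eq_zero (hED : E * D = 1)
    (hS : (1 + D * Bᵀ * (H₀ - c • 1)⁻¹ * B * D) *ᵥ x = 0) :
    Bᵀ *ᵥ (((H₀ - c • 1)⁻¹ * B * D) *ᵥ x) = -(E *ᵥ x) := by
  rw [mulVec_mulVec]
  refine mulVec_eq_neg_of_one_add_mul_mulVec_eq_zero hED ?_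
  simpa only [Matrix.mul_assoc] using hS

theorem add_mul_mul_transpose_mulVec_eq_smul_of_schur_mulVec_eq_zero
    (hH₀ : IsUnit (H₀ - c • 1).det) (hED : E * D = 1) (hΘE : Θ * E = D)
    (hS : (1 + D * Bᵀ * (H₀ - c • 1)⁻¹ * B * D) *ᵥ x = 0) :
    (H₀ + B * Θ * Bᵀ) *ᵥ (((H₀ - c • 1)⁻¹ * B * D) *ᵥ x)
      = c • (((H₀ - c • 1)⁻¹ * B * D) *ᵥ x) := by
  set r := ((H₀ - c • 1)⁻¹ * B * D) *ᵥ x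
  have hr : r = (H₀ - c • 1)⁻¹ *ᵥ ((B * D) *ᵥ x) := by
    simp only [r, mulVec_mulVec, Matrix.mul_assoc]
  have hproj : Bᵀ *ᵥ r = -(E *ᵥ x) := transpose_mulVec_eq_neg_of_schur_mulVec_eq_zero hED hS
  have hpert : (B * Θ * Bᵀ) *ᵥ r = -((B * D) *ᵥ x) := by
    rw [← mulVec_mulVec, hproj, mulVec_neg, mulVec_mulVec, Matrix.mul_assoc, hΘE]
  rw [add_mulVec, hpert, hr, mulVec_nonsing_inv_sub_smul_one_mulVec hH₀]
  abel

omit [DecidableEq m] in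
theorem dotProduct_self_nonsing_inv_mul_mulVec {M : Matrix n n R} (hM : M.IsSymm)
    (hD : D.IsSymm) :
    ((M⁻¹ * B * D) *ᵥ x) ⬝ᵥ ((M⁻¹ * B * D) *ᵥ x) = x ⬝ᵥ (D * Bᵀ * (M⁻¹ * M⁻¹) * B * D) *ᵥ x := by
  rw [← dotProduct_transpose_mulVec, mulVec_mulVec]
  simp only [transpose_mul, hD.eq, hM.nonsing_inv.eq, Matrix.mul_assoc]

end SchurComplement

end Matrix

theorem stmt19_general (N : ℕ) (H₀ : Matrix (Fin N) (Fin N) ℝ) (hH₀ : H₀.IsHermitian)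
    (B : Matrix (Fin N) (Fin 2) ℝ) (θ : Fin 2 → ℝ) (hθ : ∀ i, 0 < θ i)
    (lam : ℝ) (hlam : ∀ i, hH₀.eigenvalues i < lam)
    (x : Fin 2 → ℝ) :
    let Θ : Matrix (Fin 2) (Fin 2) ℝ := Matrix.diagonal θ
    let Θh : Matrix (Fin 2) (Fin 2) ℝ := Matrix.diagonal fun i => Real.sqrt (θ i)
    let H : Matrix (Fin N) (Fin N) ℝ := H₀ + B * Θ * Bᵀ
    let S : Matrix (Fin 2) (Fin 2) ℝ := 1 + Θh * Bᵀ * (H₀ - lam • 1)⁻¹ * B * Θh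
    S.mulVec x = 0 →
    let r : Fin N → ℝ := ((H₀ - lam • 1)⁻¹ * B * Θh).mulVec x
    H.mulVec r = lam • r ∧
    r ⬝ᵥ r = x ⬝ᵥ (Θh * Bᵀ * ((H₀ - lam • 1)⁻¹ * (H₀ - lam • 1)⁻¹) * B * Θh).mulVec x ∧
    Bᵀ.mulVec r = -(Matrix.diagonal fun i => (Real.sqrt (θ i))⁻¹).mulVec x := by
  intro Θ Θh H S hS r
  have hunit : IsUnit (H₀ - lam • 1).det :=
    (isUnit_iff_isUnit_det _).mp (hH₀.isUnit_sub_smul_one fun i => (hlam i).ne)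
  have hsqrt : ∀ i, Real.sqrt (θ i) ≠ 0 := fun i => (Real.sqrt_pos.mpr (hθ i)).ne'
  have hEΘh : (diagonal fun i => (Real.sqrt (θ i))⁻¹) * Θh = 1 := by
    rw [diagonal_mul_diagonal, ← diagonal_one]
    exact congrArg diagonal (funext fun i => inv_mul_cancel₀ (hsqrt i))
  have hΘE : Θ * (diagonal fun i => (Real.sqrt (θ i))⁻¹) = Θh := by
    rw [diagonal_mul_diagonal]
    exact congrArg diagonal (funext fun i => by rw [← div_eq_mul_inv, Real.div_sqrt])
  have hsymm : (H₀ - lam • 1).IsSymm :=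
    (isHermitian_iff_isSymm.mp hH₀).sub (isSymm_one.smul lam)
  exact ⟨add_mul_mul_transpose_mulVec_eq_smul_of_schur_mulVec_eq_zero hunit hEΘh hΘE hS,
    dotProduct_self_nonsing_inv_mul_mulVec hsymm (isSymm_diagonal _),
    transpose_mulVec_eq_neg_of_schur_mulVec_eq_zero hEΘh hS⟩

/-- Outlier eigenvector of a rank-two perturbation from a kernel vector of the
2×2 Schur complement: if `S(λ)x = 0` with `λ > λ_max(H₀)` and `x ≠ 0`, then
`r = (H₀ − λI)⁻¹BΘ^{1/2}x` satisfies `Hr = λr`,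
`‖r‖² = xᵀS'(λ)x`, and `Bᵀr = −Θ^{−1/2}x`. -/
theorem stmt19 (N : ℕ) (H₀ : Matrix (Fin N) (Fin N) ℝ) (hH₀ : H₀.IsHermitian)
    (B : Matrix (Fin N) (Fin 2) ℝ) (θ : Fin 2 → ℝ) (hθ : ∀ i, 0 < θ i)
    (lam : ℝ) (hlam : ∀ i, hH₀.eigenvalues i < lam)
    (x : Fin 2 → ℝ) (hx : x ≠ 0) :
    let Θ : Matrix (Fin 2) (Fin 2) ℝ := Matrix.diagonal θ
    let Θh : Matrix (Fin 2) (Fin 2) ℝ := Matrix.diagonal fun i => Real.sqrt (θ i)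
    let H : Matrix (Fin N) (Fin N) ℝ := H₀ + B * Θ * Bᵀ
    let S : Matrix (Fin 2) (Fin 2) ℝ := 1 + Θh * Bᵀ * (H₀ - lam • 1)⁻¹ * B * Θh
    S.mulVec x = 0 →
    let r : Fin N → ℝ := ((H₀ - lam • 1)⁻¹ * B * Θh).mulVec x
    H.mulVec r = lam • r ∧
    r ⬝ᵥ r = x ⬝ᵥ (Θh * Bᵀ * ((H₀ - lam • 1)⁻¹ * (H₀ - lam • 1)⁻¹) * B * Θh).mulVec x ∧
    Bᵀ.mulVec r = -(Matrix.diagonal fun i => (Real.sqrt (θ i))⁻¹).mulVec x :=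
  stmt19_general N H₀ hH₀ B θ hθ lam hlam x
end
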